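/- Let C be a Krull-Schmidt category, let f : M → N and g : N → L be morphisms, and let N = ⊕_j N_j be a decomposition into indecomposable objects with inclusions i_j and projections p_j. If M is indecomposable and g∘f is a split injection, then there exists an index j such that g∘i_j is a split injection and p_j∘f is an isomorphism. -/

import Mathlib

/-!
Let `ρ` be a retraction of `f ≫ g`. Then `𝟙 M = ∑ⱼ (f ≫ πⱼ) ≫ (ιⱼ ≫ g ≫ ρ)`, and since `End M`
is local one of the summands is invertible, so `f ≫ πⱼ` is a split mono into `Nⱼ`. In the local
ring `End Nⱼ` the idempotent `retraction ≫ (f ≫ πⱼ)` is `0` or `1`, and it is not `0` because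
`M ≠ 0`; hence `f ≫ πⱼ` is an isomorphism, so is `ιⱼ ≫ g ≫ ρ`, and `ιⱼ ≫ g` is split mono.
Endomorphism rings of indecomposables are local because an indecomposable object isomorphic to a
finite biproduct is isomorphic to one of its summands: the others split off as a zero complement.
-/

open CategoryTheory CategoryTheory.Limits

/-- A (preadditive) category is Krull–Schmidt if every object is a finite direct sum of
objects having local endomorphism rings. -/
def IsKrullSchmidt (C : Type*) [Category C] [Preadditive C] [HasFiniteBiproducts C] : Prop :=
  ∀ X : C, ∃ (n : ℕ) (f : Fin n → C),
    Nonempty (X ≅ ⨁ f) ∧ ∀ j, IsLocalRing (End (f j))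

theorem IsIdempotentElem.eq_zero_or_eq_one_of_isLocalRing {R : Type*} [Ring R] [IsLocalRing R]
    {e : R} (he : IsIdempotentElem e) : e = 0 ∨ e = 1 := by
  rcases IsLocalRing.isUnit_or_isUnit_of_add_one (add_sub_cancel e 1) with hu | hu
  · exact Or.inr ((IsIdempotentElem.iff_eq_one_of_isUnit hu).mp he)
  · exact Or.inl (sub_eq_self.mp ((IsIdempotentElem.iff_eq_one_of_isUnit hu).mp he.one_sub))

namespace CategoryTheory

theorem IsSplitMono.of_comp {C : Type*} [Category C] {X Y Z : C} (f : X ⟶ Y) (g : Y ⟶ Z)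
    [IsSplitMono (f ≫ g)] : IsSplitMono f :=
  IsSplitMono.mk' ⟨g ≫ retraction (f ≫ g), by rw [← Category.assoc, IsSplitMono.id]⟩

variable {C : Type*} [Category C] [Preadditive C]

def Iso.conjRingEquiv {X Y : C} (e : X ≅ Y) : End X ≃+* End Y :=
  { e.conj with
    map_add' := fun f g => by
      change e.inv ≫ (f + g : X ⟶ X) ≫ e.hom = _
      rw [Preadditive.add_comp, Preadditive.comp_add]
      rfl }

theorem isLocalRing_end_of_iso {X Y : C} (e : X ≅ Y) [IsLocalRing (End X)] :
    IsLocalRing (End Y) :=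
  (e.symm.conjRingEquiv : End Y →+* End X).domain_isLocalRing

theorem exists_isIso_comp_of_sum_eq_id {M : C} [IsLocalRing (End M)] {J : Type*} [Fintype J]
    {N : J → C} (a : ∀ j, M ⟶ N j) (b : ∀ j, N j ⟶ M) (h : ∑ j, a j ≫ b j = 𝟙 M) :
    ∃ j, IsIso (a j ≫ b j) := by
  obtain ⟨j, -, hj⟩ := IsLocalRing.exists_of_isUnit_sum (R := End M) (s := Finset.univ)
    (f := fun j => a j ≫ b j) (by rw [h]; exact isUnit_one)
  exact ⟨j, (isUnit_iff_isIso _).mp hj⟩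

theorem isIso_of_isSplitMono_of_isLocalRing {X Y : C} [IsLocalRing (End Y)] (a : X ⟶ Y)
    [IsSplitMono a] (hX : ¬IsZero X) : IsIso a := by
  have hidem : IsIdempotentElem (show End Y from retraction a ≫ a) := by
    simp [IsIdempotentElem, End.mul_def]
  rcases hidem.eq_zero_or_eq_one_of_isLocalRing with h0 | h1
  · refine absurd ?_ hX
    rw [IsZero.iff_id_eq_zero, ← IsSplitMono.id a, ← cancel_mono a, Category.assoc, zero_comp]
    exact (congrArg (a ≫ ·) h0).trans comp_zero
  · exact ⟨retraction a, IsSplitMono.id a, h1⟩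

variable [HasFiniteBiproducts C]

theorem Limits.biproduct.isZero_of_forall_isZero {J : Type} [Finite J] {F : J → C}
    (h : ∀ j, IsZero (F j)) : IsZero (⨁ F) := by
  rw [IsZero.iff_id_eq_zero]
  exact biproduct.hom_ext _ _ fun j => (h j).eq_of_tgt _ _

noncomputable def Limits.biproduct.binaryBiconeSummand {J : Type} [Finite J] [DecidableEq J]
    (F : J → C) (j : J) : BinaryBicone (F j) (⨁ Subtype.restrict (· ≠ j) F) where
  pt := ⨁ F
  fst := biproduct.π F j
  snd := biproduct.toSubtype F _
  inl := biproduct.ι F j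
  inr := biproduct.fromSubtype F _
  inl_fst := by simp
  inl_snd := by simp [biproduct.ι_toSubtype]
  inr_fst := by simp [biproduct.fromSubtype_π]
  inr_snd := by simp

theorem Limits.biproduct.binaryBiconeSummand_total {J : Type} [Finite J] [DecidableEq J]
    (F : J → C) (j : J) : biproduct.π F j ≫ biproduct.ι F j +
      biproduct.toSubtype F (· ≠ j) ≫ biproduct.fromSubtype F (· ≠ j) = 𝟙 (⨁ F) := by
  ext i k
  by_cases hi : i = j <;> by_cases hk : k = j <;> subst_vars <;> simp [biproduct.ι_π, *, Ne.symm]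

variable [HasBinaryBiproducts C]

noncomputable def Limits.biproduct.isoBiprodSummand {J : Type} [Finite J] [DecidableEq J]
    (F : J → C) (j : J) : ⨁ F ≅ F j ⊞ ⨁ Subtype.restrict (· ≠ j) F :=
  biprod.uniqueUpToIso _ _
    (isBinaryBilimitOfTotal (biproduct.binaryBiconeSummand F j)
      (biproduct.binaryBiconeSummand_total F j))

theorem Indecomposable.exists_iso_of_iso_biproduct {J : Type} [Finite J] {F : J → C} {X : C}
    (hX : Indecomposable X) (e : X ≅ ⨁ F) : ∃ j, Nonempty (X ≅ F j) := by
  classical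
  obtain ⟨j, hj⟩ : ∃ j, ¬IsZero (F j) := by
    by_contra! h
    exact hX.1 ((biproduct.isZero_of_forall_isZero h).of_iso e)
  let s := e ≪≫ biproduct.isoBiprodSummand F j
  rcases hX.2 _ _ s with h | h
  · exact absurd h hj
  · exact ⟨j, ⟨s ≪≫ (isoBiprodZero h).symm⟩⟩

theorem IsKrullSchmidt.isLocalRing_end (hKS : IsKrullSchmidt C) {X : C}
    (hX : Indecomposable X) : IsLocalRing (End X) := by
  obtain ⟨n, F, ⟨e⟩, hF⟩ := hKS X
  obtain ⟨j, ⟨e'⟩⟩ := hX.exists_iso_of_iso_biproduct e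
  have := hF j
  exact isLocalRing_end_of_iso e'.symm

end CategoryTheory

/-- In a Krull–Schmidt category, if `f : M ⟶ N`, `g : N ⟶ L`,
`N = ⊕_j N_j` with all `N_j` indecomposable, `M` is indecomposable and `g ∘ f` is a split
injection, then for some `j` the composite `g ∘ i_j` is a split injection and `p_j ∘ f` is
an isomorphism. -/
theorem krullSchmidt_split_mono_through_biproduct
    {C : Type*} [Category C] [Preadditive C] [HasFiniteBiproducts C] [HasBinaryBiproducts C]
    (hKS : IsKrullSchmidt C)
    {J : Type} [Fintype J] (N : J → C) (hN : ∀ j, Indecomposable (N j))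
    {M L : C} (f : M ⟶ ⨁ N) (g : ⨁ N ⟶ L)
    (hM : Indecomposable M) (hgf : IsSplitMono (f ≫ g)) :
    ∃ j : J, IsSplitMono (biproduct.ι N j ≫ g) ∧ IsIso (f ≫ biproduct.π N j) := by
  have := hKS.isLocalRing_end hM
  let b : ∀ j, N j ⟶ M := fun j => (biproduct.ι N j ≫ g) ≫ retraction (f ≫ g)
  have hsum : ∑ j, (f ≫ biproduct.π N j) ≫ b j = 𝟙 M :=
    calc ∑ j, (f ≫ biproduct.π N j) ≫ b j
        = f ≫ (∑ j, biproduct.π N j ≫ biproduct.ι N j) ≫ g ≫ retraction (f ≫ g) := by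
          simp only [b, Preadditive.sum_comp, Preadditive.comp_sum, Category.assoc]
      _ = 𝟙 M := by rw [biproduct.total, Category.id_comp, ← Category.assoc, IsSplitMono.id]
  obtain ⟨j, hj⟩ := exists_isIso_comp_of_sum_eq_id _ b hsum
  have := hKS.isLocalRing_end (hN j)
  have := IsSplitMono.of_comp (f ≫ biproduct.π N j) (b j)
  have hπ : IsIso (f ≫ biproduct.π N j) := isIso_of_isSplitMono_of_isLocalRing _ hM.1
  have : IsIso (b j) := IsIso.of_isIso_comp_left (f ≫ biproduct.π N j) (b j)
  exact ⟨j, IsSplitMono.of_comp _ (retraction (f ≫ g)), hπ⟩
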